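/- Let p₁, p₂, p₃ and q₁, q₂, q₃ be two triples of points in ℝ³ such that ‖pₐ − p_b‖ = ‖qₐ − q_b‖ for all a, b ∈ {1, 2, 3}. Then there exist a 3×3 real matrix R with Rᵀ R = 1 and det R = 1 (i.e., R ∈ SO(3)) and a vector t ∈ ℝ³ such that qₐ = R pₐ + t for a = 1, 2, 3. -/

import Mathlib

open scoped Matrix

/-- The action of a 3×3 matrix on a vector of ℝ³ by matrix–vector multiplication
(definitionally `Matrix.mulVec`, regarded as valued in `EuclideanSpace ℝ (Fin 3)`). -/
def matVec (R : Matrix (Fin 3) (Fin 3) ℝ) (x : EuclideanSpace ℝ (Fin 3)) :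
    EuclideanSpace ℝ (Fin 3) :=
  WithLp.toLp 2 (R.mulVec x)

open Module

noncomputable section

private def lc (u : Fin 3 → EuclideanSpace ℝ (Fin 3)) :
    (Fin 3 → ℝ) →ₗ[ℝ] EuclideanSpace ℝ (Fin 3) where
  toFun c := ∑ a, c a • u a
  map_add' x y := by simp [add_smul, Finset.sum_add_distrib]
  map_smul' r x := by simp [smul_smul, Finset.smul_sum]

private lemma lc_single (u : Fin 3 → EuclideanSpace ℝ (Fin 3)) (a : Fin 3) :
    lc u (Pi.single a 1) = u a := by
  simp [lc, Pi.single_apply, ite_smul]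

private lemma lc_inner (u v : Fin 3 → EuclideanSpace ℝ (Fin 3))
    (hg : ∀ a b, (inner ℝ (u a) (u b) : ℝ) = inner ℝ (v a) (v b)) (x y : Fin 3 → ℝ) :
    (inner ℝ (lc u x) (lc u y) : ℝ) = inner ℝ (lc v x) (lc v y) := by
  simp only [lc, LinearMap.coe_mk, AddHom.coe_mk, sum_inner, inner_sum,
    real_inner_smul_left, real_inner_smul_right]
  exact Finset.sum_congr rfl fun a _ => Finset.sum_congr rfl fun b _ => by rw [hg]

private lemma exists_isometry_map
    (u v : Fin 3 → EuclideanSpace ℝ (Fin 3))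
    (hg : ∀ a b, (inner ℝ (u a) (u b) : ℝ) = inner ℝ (v a) (v b)) :
    ∃ L : EuclideanSpace ℝ (Fin 3) →ₗᵢ[ℝ] EuclideanSpace ℝ (Fin 3),
      ∀ a, L (u a) = v a := by
  set A := lc u with hA
  set B := lc v with hB
  have hnorm : ∀ x, ‖A x‖ = ‖B x‖ := by
    intro x
    have h1 : (‖A x‖ : ℝ) ^ 2 = ‖B x‖ ^ 2 := by
      rw [← real_inner_self_eq_norm_sq, ← real_inner_self_eq_norm_sq]
      exact lc_inner u v hg x x
    nlinarith [norm_nonneg (A x), norm_nonneg (B x)]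
  have hker : LinearMap.ker A ≤ LinearMap.ker B := by
    intro x hx
    have : ‖B x‖ = 0 := by rw [← hnorm]; simp [LinearMap.mem_ker.mp hx]
    simpa [LinearMap.mem_ker] using norm_eq_zero.mp this
  set g : ((Fin 3 → ℝ) ⧸ LinearMap.ker A) →ₗ[ℝ] EuclideanSpace ℝ (Fin 3) :=
    (LinearMap.ker A).liftQ B hker with hgdef
  set e := A.quotKerEquivRange with hedef
  set φ₀ : LinearMap.range A →ₗ[ℝ] EuclideanSpace ℝ (Fin 3) :=
    g ∘ₗ e.symm.toLinearMap with hφ₀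
  have key : ∀ x : Fin 3 → ℝ, φ₀ ⟨A x, LinearMap.mem_range_self A x⟩ = B x := by
    intro x
    have h1 : e (Submodule.Quotient.mk x) = ⟨A x, LinearMap.mem_range_self A x⟩ :=
      Subtype.ext (A.quotKerEquivRange_apply_mk x)
    have h2 : e.symm ⟨A x, LinearMap.mem_range_self A x⟩ = Submodule.Quotient.mk x := by
      rw [← h1, LinearEquiv.symm_apply_apply]
    simp [hφ₀, h2, hgdef, Submodule.liftQ_apply]
  have hiso : ∀ s : LinearMap.range A, ‖φ₀ s‖ = ‖s‖ := by
    rintro ⟨s, hs⟩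
    obtain ⟨x, rfl⟩ := hs
    rw [key x, ← hnorm]
    rfl
  set φ : (LinearMap.range A) →ₗᵢ[ℝ] EuclideanSpace ℝ (Fin 3) := ⟨φ₀, hiso⟩ with hφ
  refine ⟨φ.extend, fun a => ?_⟩
  have hua : u a ∈ LinearMap.range A :=
    ⟨Pi.single a 1, by rw [hA, lc_single]⟩
  have : φ.extend (u a) = φ ⟨u a, hua⟩ := φ.extend_apply ⟨u a, hua⟩
  rw [this]
  have heq : (⟨u a, hua⟩ : LinearMap.range A)
      = ⟨A (Pi.single a 1), LinearMap.mem_range_self A _⟩ := by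
    exact Subtype.ext (lc_single u a).symm
  show φ₀ _ = v a
  rw [heq, key, hB, lc_single]

private lemma matVec_toEuclideanLin_symm (f : EuclideanSpace ℝ (Fin 3) →ₗ[ℝ] EuclideanSpace ℝ (Fin 3))
    (x : EuclideanSpace ℝ (Fin 3)) :
    (Matrix.toEuclideanLin.symm f) *ᵥ (x : Fin 3 → ℝ) = f x := by
  have h : Matrix.toEuclideanLin (Matrix.toEuclideanLin.symm f) x = f x := by
    rw [LinearEquiv.apply_symm_apply]
  rw [← h, Matrix.toEuclideanLin_apply]

private lemma transpose_mul_self_eq_one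
    (f : EuclideanSpace ℝ (Fin 3) →ₗ[ℝ] EuclideanSpace ℝ (Fin 3))
    (hf : ∀ x y, (inner ℝ (f x) (f y) : ℝ) = inner ℝ x y) :
    (Matrix.toEuclideanLin.symm f)ᵀ * (Matrix.toEuclideanLin.symm f) = 1 := by
  set R := Matrix.toEuclideanLin.symm f with hR
  ext i j
  have hb : ∀ k : Fin 3, f (EuclideanSpace.single k 1) = fun l => R l k := by
    intro k
    have := matVec_toEuclideanLin_symm f (EuclideanSpace.single k 1)
    rw [← this]
    funext l
    show (R *ᵥ (Pi.single k 1)) l = R l k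
    simp [Matrix.mulVec_single]
  have h2 := hf (EuclideanSpace.single i 1) (EuclideanSpace.single j 1)
  simp only [PiLp.inner_apply] at h2
  rw [hb i, hb j] at h2
  simp only [PiLp.inner_apply, RCLike.inner_apply, conj_trivial,
    EuclideanSpace.single_apply] at h2
  rw [Matrix.mul_apply]
  simp only [Matrix.transpose_apply, Matrix.one_apply]
  rw [show ∑ x, R x i * R x j = ∑ x, R x j * R x i from
    Finset.sum_congr rfl fun x _ => mul_comm _ _, h2]
  simp [Finset.sum_ite_eq, eq_comm]

private lemma det_symm (f : EuclideanSpace ℝ (Fin 3) →ₗ[ℝ] EuclideanSpace ℝ (Fin 3)) :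
    (Matrix.toEuclideanLin.symm f).det = LinearMap.det f := by
  rw [Matrix.toEuclideanLin_eq_toLin, Matrix.toLin_symm, LinearMap.det_toMatrix]

private lemma exists_SO3_map (u v : Fin 3 → EuclideanSpace ℝ (Fin 3))
    (hg : ∀ a b, (inner ℝ (u a) (u b) : ℝ) = inner ℝ (v a) (v b)) (hv0 : v 0 = 0) :
    ∃ f : EuclideanSpace ℝ (Fin 3) →ₗ[ℝ] EuclideanSpace ℝ (Fin 3),
      (∀ x y, (inner ℝ (f x) (f y) : ℝ) = inner ℝ x y) ∧ LinearMap.det f = 1 ∧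
      ∀ a, f (u a) = v a := by
  obtain ⟨L, hL⟩ := exists_isometry_map u v hg
  have hLi : ∀ x y, (inner ℝ (L.toLinearMap x) (L.toLinearMap y) : ℝ) = inner ℝ x y :=
    fun x y => L.inner_map_map x y
  have hdet : LinearMap.det L.toLinearMap = 1 ∨ LinearMap.det L.toLinearMap = -1 := by
    have h1 := transpose_mul_self_eq_one L.toLinearMap hLi
    have h2 : (Matrix.toEuclideanLin.symm L.toLinearMap).det ^ 2 = 1 := by
      have := congrArg Matrix.det h1
      rwa [Matrix.det_mul, Matrix.det_transpose, Matrix.det_one, ← sq] at this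
    rw [det_symm] at h2
    have h3 : (LinearMap.det L.toLinearMap - 1) * (LinearMap.det L.toLinearMap + 1) = 0 := by
      ring_nf; nlinarith [h2]
    rcases mul_eq_zero.mp h3 with h | h
    · left; linarith
    · right; linarith
  rcases hdet with hdet | hdet
  · exact ⟨L.toLinearMap, hLi, hdet, hL⟩
  · -- compose with a reflection fixing all the `v a`
    classical
    set K : Submodule ℝ (EuclideanSpace ℝ (Fin 3)) :=
      Submodule.span ℝ (Set.range ![v 1, v 2]) with hK
    have hKrank : Module.finrank ℝ K ≤ 2 := by
      refine le_trans (finrank_span_le_card _) ?_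
      rw [Set.toFinset_card]
      simpa using Fintype.card_range_le ![v 1, v 2]
    have hKo : Kᗮ ≠ ⊥ := by
      intro hbot
      have : K = ⊤ := Submodule.orthogonal_eq_bot_iff.mp hbot
      rw [this] at hKrank
      rw [finrank_top] at hKrank
      rw [finrank_euclideanSpace_fin] at hKrank
      omega
    obtain ⟨w, hwK, hw0⟩ := (Submodule.ne_bot_iff _).mp hKo
    set K' : Submodule ℝ (EuclideanSpace ℝ (Fin 3)) := (ℝ ∙ w)ᗮ with hK'
    have hvK' : ∀ a, v a ∈ K' := by
      have h12 : ∀ a, v a ∈ K → v a ∈ K' := by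
        intro a ha
        rw [hK', Submodule.mem_orthogonal]
        intro x hx
        obtain ⟨c, rfl⟩ := Submodule.mem_span_singleton.mp hx
        have : (inner ℝ (v a) w : ℝ) = 0 := (Submodule.mem_orthogonal K w).mp hwK _ ha
        rw [real_inner_smul_left, real_inner_comm, this, mul_zero]
      intro a
      fin_cases a
      · show v 0 ∈ K'
        rw [hv0]; exact zero_mem _
      · exact h12 1 (Submodule.subset_span ⟨0, rfl⟩)
      · exact h12 2 (Submodule.subset_span ⟨1, rfl⟩)
    refine ⟨(K'.reflection).toLinearMap ∘ₗ L.toLinearMap, ?_, ?_, ?_⟩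
    · intro x y
      simp only [LinearMap.comp_apply]
      show (inner ℝ (K'.reflection (L x)) (K'.reflection (L y)) : ℝ) = inner ℝ x y
      rw [(K'.reflection).inner_map_map]
      exact L.inner_map_map x y
    · rw [LinearMap.det_comp, hdet]
      have hdr : LinearMap.det (K'.reflection).toLinearMap
          = (-1) ^ Module.finrank ℝ K'ᗮ := K'.det_reflection
      rw [hdr, hK', Submodule.orthogonal_orthogonal, finrank_span_singleton hw0]
      ring
    · intro a
      simp only [LinearMap.comp_apply]
      show K'.reflection (L (u a)) = v a
      rw [hL a]
      exact K'.reflection_mem_subspace_eq_self (hvK' a)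


/-- Base case n = 3 of Proposition 1 of ComENet: two triples of points in ℝ³ with equal
pairwise distances are related by a direct rigid motion `x ↦ R x + t` with `R ∈ SO(3)`. -/
theorem exists_SO3_translation_of_triple_dist_eq
    (p q : Fin 3 → EuclideanSpace ℝ (Fin 3))
    (h : ∀ a b : Fin 3, ‖p a - p b‖ = ‖q a - q b‖) :
    ∃ (R : Matrix (Fin 3) (Fin 3) ℝ) (t : EuclideanSpace ℝ (Fin 3)),
      Rᵀ * R = 1 ∧ R.det = 1 ∧ ∀ a : Fin 3, q a = matVec R (p a) + t := by
  set u : Fin 3 → EuclideanSpace ℝ (Fin 3) := fun a => p a - p 0 with hu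
  set v : Fin 3 → EuclideanSpace ℝ (Fin 3) := fun a => q a - q 0 with hv
  have hnorm : ∀ a, ‖u a‖ = ‖v a‖ := fun a => h a 0
  have hnorms : ∀ a b, ‖u a - u b‖ = ‖v a - v b‖ := by
    intro a b
    have h1 : u a - u b = p a - p b := by simp [hu]
    have h2 : v a - v b = q a - q b := by simp [hv]
    rw [h1, h2]; exact h a b
  have hg : ∀ a b, (inner ℝ (u a) (u b) : ℝ) = inner ℝ (v a) (v b) := by
    intro a b
    have e1 := norm_sub_sq_real (u a) (u b)
    have e2 := norm_sub_sq_real (v a) (v b)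
    rw [hnorm a, hnorm b, hnorms a b] at e1
    linarith [e1, e2]
  have hv0 : v 0 = 0 := by simp [hv]
  obtain ⟨f, hfi, hfd, hfv⟩ := exists_SO3_map u v hg hv0
  refine ⟨Matrix.toEuclideanLin.symm f, q 0 - f (p 0), ?_, ?_, ?_⟩
  · exact transpose_mul_self_eq_one f hfi
  · rw [det_symm]; exact hfd
  · intro a
    have h1 : matVec (Matrix.toEuclideanLin.symm f) (p a) = f (p a) :=
      congrArg (WithLp.toLp 2) (matVec_toEuclideanLin_symm f (p a))
    rw [h1]
    have h3 : f (p a) - f (p 0) = q a - q 0 := by rw [← map_sub]; exact hfv a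
    calc q a = (q a - q 0) + q 0 := by abel
      _ = (f (p a) - f (p 0)) + q 0 := by rw [h3]
      _ = f (p a) + (q 0 - f (p 0)) := by abel

end
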